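/- arXiv:math/0611937 — 3 statements merged into one kernel-verified Lean document; each statement's English description precedes it below -/
import Mathlib

section
/- Let μ be a preferential choice function with (μ⊆): μ(X) ⊆ X, (μPR): X ⊆ Y → μ(Y) ∩ X ⊆ μ(X), and (μCUM): μ(X) ⊆ Y ⊆ X → μ(Y) = μ(X). If μ(b) ⊆ d, μ(c) ⊆ b, and μ(c) ∩ d = ∅, then μ(b) ∩ c = ∅. -/
section ChoiceFunction

variable {U : Type*} (μ : Set U → Set U)

theorem choice_inter_eq_of_choice_subset
    (hsub : ∀ X : Set U, μ X ⊆ X)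
    (hcum : ∀ X Y : Set U, μ X ⊆ Y → Y ⊆ X → μ Y = μ X)
    {b c : Set U} (hcb : μ c ⊆ b) :
    μ (b ∩ c) = μ c :=
  hcum c (b ∩ c) (Set.subset_inter hcb (hsub c)) Set.inter_subset_right

theorem choice_inter_subset_choice_inter
    (hsub : ∀ X : Set U, μ X ⊆ X)
    (hpr : ∀ X Y : Set U, X ⊆ Y → μ Y ∩ X ⊆ μ X)
    (b c : Set U) :
    μ b ∩ c ⊆ μ (b ∩ c) := fun _ ⟨hxb, hxc⟩ =>
  hpr (b ∩ c) b Set.inter_subset_left ⟨hxb, hsub b hxb, hxc⟩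

end ChoiceFunction

/-- For a preferential choice function μ with (μ⊆), (μPR) and (μCUM):
if μ(b) ⊆ d, μ(c) ⊆ b and μ(c) ∩ d = ∅, then μ(b) ∩ c = ∅ -- System P forces
"normally b's are not c's", an arrow absent from the inheritance net. -/
theorem stmt8 {U : Type*} (μ : Set U → Set U)
    (hsub : ∀ X : Set U, μ X ⊆ X)
    (hpr : ∀ X Y : Set U, X ⊆ Y → μ Y ∩ X ⊆ μ X)
    (hcum : ∀ X Y : Set U, μ X ⊆ Y → Y ⊆ X → μ Y = μ X)
    (b c d : Set U)
    (hbd : μ b ⊆ d) (hcb : μ c ⊆ b) (hcd : μ c ∩ d = ∅) :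
    μ b ∩ c = ∅ := by
  have hc : μ b ∩ c ⊆ μ c :=
    choice_inter_eq_of_choice_subset μ hsub hcum hcb ▸
      choice_inter_subset_choice_inter μ hsub hpr b c
  have hd : μ b ∩ c ⊆ d := Set.inter_subset_left.trans hbd
  exact Set.subset_eq_empty (Set.subset_inter hc hd) hcd
end

section
/- Split-validity preclusion propagates along alternative upper paths: in the directly sceptical upward-chaining split-validity formalism, if σ : A ⋯→ B is a valid positive path, B → C ∈ Γ, the concatenation σ ∘ (B → C) is valid, and σ' : A ⋯→ B is another valid positive path from A to B, then σ' ∘ (B → C) is also valid. -/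
/-- There is a (possibly empty) valid positive path from a to b:
either a = b, or some valid path leads from a to b. -/
def Reaches {V : Type*} (Valid : List V → Prop) (a b : V) : Prop :=
  a = b ∨ ∃ τ : List V, Valid τ ∧ τ.head? = some a ∧ τ.getLast? = some b

/-- There is a proper (nonempty) valid positive path from a to b. -/
def ReachesP {V : Type*} (Valid : List V → Prop) (a b : V) : Prop :=
  ∃ τ : List V, Valid τ ∧ τ.head? = some a ∧ τ.getLast? = some b

/-- Split-validity preclusion of the positive candidate x ⋯→ u → y:
there is v with v ↛ y ∈ Γ, a valid path (possibly empty) from x to v,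
and a valid path from v to u. -/
def PrecludedPos {V : Type*} (neg : V → V → Prop) (Valid : List V → Prop)
    (x u y : V) : Prop :=
  ∃ v, neg v y ∧ Reaches Valid x v ∧ ReachesP Valid v u

/-- All potentially conflicting negative candidates against the conclusion
"x's are y's" are themselves precluded: for every v with v ↛ y ∈ Γ and a valid
path from x to v, there is z with z → y ∈ Γ and either z = x or valid paths
from x to z and from z to v. -/
def ConflictsPrecluded {V : Type*} (pos neg : V → V → Prop)
    (Valid : List V → Prop) (x y : V) : Prop :=
  ∀ v, neg v y → ReachesP Valid x v →
    ∃ z, pos z y ∧ (z = x ∨ (ReachesP Valid x z ∧ ReachesP Valid z v))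

theorem stmt18_general {V : Type*} (pos neg : V → V → Prop) (Valid : List V → Prop)
    (hpath : ∀ l : List V, Valid l → l.Chain' pos ∧ 2 ≤ l.length)
    (hcomp : ∀ (σ' : List V) (x u y : V), 2 ≤ σ'.length →
      σ'.head? = some x → σ'.getLast? = some u →
      (Valid (σ' ++ [y]) ↔
        (Valid σ' ∧ pos u y ∧
         ¬ PrecludedPos neg Valid x u y ∧
         ConflictsPrecluded pos neg Valid x y))) :
    ∀ (σ σ' : List V) (A B C : V),
      Valid σ → σ.head? = some A → σ.getLast? = some B →
      pos B C → Valid (σ ++ [C]) →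
      Valid σ' → σ'.head? = some A → σ'.getLast? = some B →
      Valid (σ' ++ [C]) := by
  intro σ σ' A B C hσ hσA hσB hBC hσC hσ' hσ'A hσ'B
  -- Preclusion and conflict resolution of `⋯ → B → C` depend only on `A`, `B`, `C`.
  obtain ⟨-, -, hnotPrecluded, hconflicts⟩ :=
    (hcomp σ A B C (hpath σ hσ).2 hσA hσB).mp hσC
  exact (hcomp σ' A B C (hpath σ' hσ').2 hσ'A hσ'B).mpr
    ⟨hσ', hBC, hnotPrecluded, hconflicts⟩

/-- Split-validity preclusion propagates along alternative upper paths: if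
σ : A ⋯→ B is valid, B → C ∈ Γ, σ ∘ (B → C) is valid, and σ' : A ⋯→ B is
another valid positive path, then σ' ∘ (B → C) is also valid. -/
theorem stmt18 {V : Type*} (pos neg : V → V → Prop) (Valid : List V → Prop)
    (hpath : ∀ l : List V, Valid l → l.Chain' pos ∧ 2 ≤ l.length)
    (hdir : ∀ x u : V, Valid [x, u] ↔ pos x u)
    (hcomp : ∀ (σ' : List V) (x u y : V), 2 ≤ σ'.length →
      σ'.head? = some x → σ'.getLast? = some u →
      (Valid (σ' ++ [y]) ↔
        (Valid σ' ∧ pos u y ∧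
         ¬ PrecludedPos neg Valid x u y ∧
         ConflictsPrecluded pos neg Valid x y))) :
    ∀ (σ σ' : List V) (A B C : V),
      Valid σ → σ.head? = some A → σ.getLast? = some B →
      pos B C → Valid (σ ++ [C]) →
      Valid σ' → σ'.head? = some A → σ'.getLast? = some B →
      Valid (σ' ++ [C]) :=
  stmt18_general pos neg Valid hpath hcomp
end

section
/- The relation 'there is a valid positive path from A to B' in an inheritance net need not be transitive: there exists a finite inheritance diagram with nodes a, b, c, d such that a⋯→b and b⋯→d hold (valid positive paths exist), but there is no valid positive path from a to d. -/
/-- The positive links of the Tweety diagram on nodes a = 0, c = 1, b = 2,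
d = 3: a → c, c → b, b → d. -/
def posT : Fin 4 → Fin 4 → Prop := fun p q =>
  (p = 0 ∧ q = 1) ∨ (p = 1 ∧ q = 2) ∨ (p = 2 ∧ q = 3)

/-- The negative link of the Tweety diagram: c ↛ d. -/
def negT : Fin 4 → Fin 4 → Prop := fun p q => p = 1 ∧ q = 3

lemma posT_succ : ∀ x y : Fin 4, posT x y → (x = 0 ∧ y = 1) ∨ (x = 1 ∧ y = 2) ∨ (x = 2 ∧ y = 3) := by
  intro x y h; exact h

lemma chain_eq : ∀ τ : List (Fin 4), τ.Chain' posT → τ.head? = some 0 →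
    τ.getLast? = some 3 → τ = [0, 1, 2, 3] := by
  have hstep : ∀ x y : Fin 4, posT x y →
      (x = 0 → y = 1) ∧ (x = 1 → y = 2) ∧ (x = 2 → y = 3) ∧ x ≠ 3 := by
    unfold posT; decide
  rintro (_ | ⟨a, _ | ⟨b, _ | ⟨c, _ | ⟨d, _ | ⟨e, rest⟩⟩⟩⟩⟩) hc h0 h3
  · simp at h0
  · simp at h0 h3; subst h0; exact absurd h3 (by decide)
  · simp only [List.Chain', List.isChain_cons_cons] at hc
    simp at h0 h3; subst h0; subst h3
    exact absurd ((hstep _ _ hc.1).1 rfl) (by decide)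
  · simp only [List.Chain', List.isChain_cons_cons] at hc
    simp at h0 h3; subst h0; subst h3
    have hb := (hstep _ _ hc.1).1 rfl; subst hb
    exact absurd ((hstep _ _ hc.2.1).2.1 rfl) (by decide)
  · simp only [List.Chain', List.isChain_cons_cons] at hc
    simp at h0 h3; subst h0; subst h3
    have hb := (hstep _ _ hc.1).1 rfl; subst hb
    have hq := (hstep _ _ hc.2.1).2.1 rfl; subst hq
    rfl
  · simp only [List.Chain', List.isChain_cons_cons] at hc
    simp at h0; subst h0
    have hb := (hstep _ _ hc.1).1 rfl; subst hb
    have hq := (hstep _ _ hc.2.1).2.1 rfl; subst hq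
    have hd := (hstep _ _ hc.2.2.1).2.2.1 rfl; subst hd
    exact absurd rfl (hstep _ _ hc.2.2.2.1).2.2.2

/-- "Valid positive path" is not transitive: in the Tweety diagram there are
valid positive paths from a to b and from b to d, but none from a to d. -/
theorem stmt19 :
    ∀ Valid : List (Fin 4) → Prop,
      (∀ l : List (Fin 4), Valid l → l.Chain' posT ∧ 2 ≤ l.length) →
      (∀ x u : Fin 4, Valid [x, u] ↔ posT x u) →
      (∀ (σ' : List (Fin 4)) (x u y : Fin 4), 2 ≤ σ'.length →
        σ'.head? = some x → σ'.getLast? = some u →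
        (Valid (σ' ++ [y]) ↔
          (Valid σ' ∧ posT u y ∧
           ¬ PrecludedPos negT Valid x u y ∧
           ConflictsPrecluded posT negT Valid x y))) →
      ReachesP Valid 0 2 ∧ ReachesP Valid 2 3 ∧ ¬ ReachesP Valid 0 3 := by
  intro Valid hchain hlink hext
  have h01 : Valid [0, 1] := (hlink 0 1).2 (by simp [posT])
  have h12 : Valid [1, 2] := (hlink 1 2).2 (by simp [posT])
  have h23 : Valid [2, 3] := (hlink 2 3).2 (by simp [posT])
  have h012 : Valid [0, 1, 2] := by
    have := hext [0, 1] 0 1 2 (by simp) (by simp) (by simp)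
    rw [show ([0,1] : List (Fin 4)) ++ [2] = [0,1,2] by simp] at this
    refine this.2 ⟨h01, by simp [posT], ?_, ?_⟩
    · rintro ⟨v, hv, -, -⟩
      exact absurd hv.2 (by decide)
    · intro v hv _
      exact absurd hv.2 (by decide)
  refine ⟨⟨[0,1,2], h012, by simp, by simp⟩, ⟨[2,3], h23, by simp, by simp⟩, ?_⟩
  rintro ⟨τ, hv, h0, h3⟩
  obtain ⟨hc, -⟩ := hchain τ hv
  have heq : τ = [0, 1, 2, 3] := chain_eq τ hc h0 h3
  subst heq
  have := hext [0, 1, 2] 0 2 3 (by simp) (by simp) (by simp)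
  rw [show ([0,1,2] : List (Fin 4)) ++ [3] = [0,1,2,3] by simp] at this
  obtain ⟨-, -, hnp, -⟩ := this.1 hv
  exact hnp ⟨1, by simp [negT], Or.inr ⟨[0,1], h01, by simp, by simp⟩,
    ⟨[1,2], h12, by simp, by simp⟩⟩
end
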